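/- For the two tangent spheres M ⊆ ℝ⁴ and the curves α(s) = (s, √(1-(1-s)²), 0, 1), β(s) = (-s, √(1-(1-s)²), 0, 1) for s ∈ (0,1): ‖α(s)-β(s)‖ = 2s, any path in M from α(s) to β(s) must pass through the tangency point (0,0,0,1), hence d_M(α(s),β(s)) ≥ 2√(2s - s²), and consequently d_M(α(s),β(s))/‖α(s)-β(s)‖ ≥ √(2/s - 1), which is unbounded as s → 0⁺. -/
import Mathlib


open Set Filter Metric

/-- Length of a path `γ : [0,1] → E` measured via the (extended) variation. -/
noncomputable def pathLength {E : Type*} [NormedAddCommGroup E] (γ : ℝ → E) : ENNReal :=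
  eVariationOn γ (Set.Icc 0 1)

/-- `γ` is a path in `X` from `x` to `y`, parametrized on `[0,1]`. -/
def IsPathIn {E : Type*} [NormedAddCommGroup E] (X : Set E) (x y : E) (γ : ℝ → E) : Prop :=
  ContinuousOn γ (Set.Icc 0 1) ∧ Set.MapsTo γ (Set.Icc 0 1) X ∧ γ 0 = x ∧ γ 1 = y

/-- The inner (length) distance on `X`: the infimum of the lengths of paths in `X`
joining `x` to `y`. -/
noncomputable def innerDist {E : Type*} [NormedAddCommGroup E] (X : Set E) (x y : E) : ENNReal :=
  ⨅ γ ∈ {γ : ℝ → E | IsPathIn X x y γ}, pathLength γ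

/-- Points of `ℝ⁴` from four coordinates. -/
noncomputable def mk4 (a b c d : ℝ) : EuclideanSpace ℝ (Fin 4) :=
  (WithLp.equiv 2 (Fin 4 → ℝ)).symm ![a, b, c, d]

/-- The union of the two unit spheres in the hyperplane `{t = 1} ⊆ ℝ⁴` centered at
`(±1, 0, 0, 1)`, tangent at `(0,0,0,1)`. -/
def M4 : Set (EuclideanSpace ℝ (Fin 4)) :=
  {p | p 3 = 1 ∧ ((p 0 - 1) ^ 2 + (p 1) ^ 2 + (p 2) ^ 2 = 1 ∨
    (p 0 + 1) ^ 2 + (p 1) ^ 2 + (p 2) ^ 2 = 1)}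

/-- The witness curves on the two spheres. -/
noncomputable def alpha11 (s : ℝ) : EuclideanSpace ℝ (Fin 4) :=
  mk4 s (Real.sqrt (1 - (1 - s) ^ 2)) 0 1

noncomputable def beta11 (s : ℝ) : EuclideanSpace ℝ (Fin 4) :=
  mk4 (-s) (Real.sqrt (1 - (1 - s) ^ 2)) 0 1

lemma mk4_zero (a b c d : ℝ) : mk4 a b c d 0 = a := by simp [mk4]
lemma mk4_one (a b c d : ℝ) : mk4 a b c d 1 = b := by simp [mk4]
lemma mk4_two (a b c d : ℝ) : mk4 a b c d 2 = c := by simp [mk4]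
lemma mk4_three (a b c d : ℝ) : mk4 a b c d 3 = d := by simp [mk4]

lemma mk4_sub (a b c d a' b' c' d' : ℝ) :
    mk4 a b c d - mk4 a' b' c' d' = mk4 (a-a') (b-b') (c-c') (d-d') := by
  ext i; fin_cases i <;> simp [mk4]

lemma norm_mk4 (a b c d : ℝ) : ‖mk4 a b c d‖ = Real.sqrt (a^2+b^2+c^2+d^2) := by
  rw [EuclideanSpace.norm_eq]
  simp [mk4, Fin.sum_univ_four, sq_abs]

lemma sq_aux {s : ℝ} (hs : s ∈ Set.Ioo (0:ℝ) 1) :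
    1 - (1 - s)^2 = 2*s - s^2 := by ring

lemma sqrt_sq_aux {s : ℝ} (hs : s ∈ Set.Ioo (0:ℝ) 1) :
    Real.sqrt (1 - (1 - s)^2) ^ 2 = 2*s - s^2 := by
  rw [Real.sq_sqrt (by nlinarith [hs.1, hs.2] : (0:ℝ) ≤ 1 - (1-s)^2)]
  ring

set_option maxHeartbeats 1000000 in
theorem stmt11 :
    (∀ s ∈ Set.Ioo (0 : ℝ) 1,
      alpha11 s ∈ M4 ∧ beta11 s ∈ M4 ∧
      ‖alpha11 s - beta11 s‖ = 2 * s ∧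
      (∀ γ : ℝ → EuclideanSpace ℝ (Fin 4), IsPathIn M4 (alpha11 s) (beta11 s) γ →
        ∃ u ∈ Set.Icc (0 : ℝ) 1, γ u = mk4 0 0 0 1) ∧
      ENNReal.ofReal (2 * Real.sqrt (2 * s - s ^ 2)) ≤ innerDist M4 (alpha11 s) (beta11 s) ∧
      ENNReal.ofReal (Real.sqrt (2 / s - 1) * ‖alpha11 s - beta11 s‖) ≤
        innerDist M4 (alpha11 s) (beta11 s)) ∧
    (∀ Cb : ℝ, ∃ s ∈ Set.Ioo (0 : ℝ) 1, Cb < Real.sqrt (2 / s - 1)) := by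
  constructor
  · intro s hs
    obtain ⟨hs0, hs1⟩ := hs
    have hsq : Real.sqrt (1 - (1 - s)^2) ^ 2 = 2*s - s^2 := sqrt_sq_aux ⟨hs0, hs1⟩
    -- membership
    have hα : alpha11 s ∈ M4 := by
      refine ⟨by simp [alpha11, mk4_three], Or.inl ?_⟩
      simp only [alpha11, mk4_zero, mk4_one, mk4_two]
      nlinarith [hsq]
    have hβ : beta11 s ∈ M4 := by
      refine ⟨by simp [beta11, mk4_three], Or.inr ?_⟩
      simp only [beta11, mk4_zero, mk4_one, mk4_two]
      nlinarith [hsq]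
    -- norm of difference
    have hnorm : ‖alpha11 s - beta11 s‖ = 2 * s := by
      rw [alpha11, beta11, mk4_sub]
      have : s - -s = 2*s := by ring
      rw [this]
      simp only [sub_self, norm_mk4]
      rw [show (2*s)^2 + 0^2 + 0^2 + 0^2 = (2*s)^2 by ring,
        Real.sqrt_sq (by linarith)]
    -- through tangency point
    have htang : ∀ γ : ℝ → EuclideanSpace ℝ (Fin 4),
        IsPathIn M4 (alpha11 s) (beta11 s) γ →
        ∃ u ∈ Set.Icc (0 : ℝ) 1, γ u = mk4 0 0 0 1 := by
      intro γ ⟨hcont, hmaps, h0, h1⟩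
      have hf : ContinuousOn (fun u => γ u 0) (Set.Icc 0 1) :=
        (EuclideanSpace.proj (0 : Fin 4)).continuous.comp_continuousOn hcont
      have key : (0:ℝ) ∈ Set.Icc ((fun u => γ u 0) 1) ((fun u => γ u 0) 0) := by
        simp only [h0, h1, alpha11, beta11, mk4_zero]
        exact ⟨by linarith, by linarith⟩
      have := intermediate_value_Icc' (le_of_lt one_pos) hf key
      obtain ⟨u, hu, hu0⟩ := this
      refine ⟨u, hu, ?_⟩
      have hmem := hmaps hu
      obtain ⟨h3, hor⟩ := hmem
      have h12 : γ u 1 = 0 ∧ γ u 2 = 0 := by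
        rcases hor with h | h <;>
          constructor <;> nlinarith [hu0, sq_nonneg (γ u 1), sq_nonneg (γ u 2)]
      ext i
      fin_cases i <;>
        simp only [mk4_zero, mk4_one, mk4_two, mk4_three] <;>
        first
          | exact hu0
          | exact h12.1
          | exact h12.2
          | exact h3
    -- distance lower bound
    have hd1 : ENNReal.ofReal (2 * Real.sqrt (2 * s - s ^ 2)) ≤
        innerDist M4 (alpha11 s) (beta11 s) := by
      rw [innerDist]
      refine le_iInf₂ fun γ hγ => ?_
      obtain ⟨u, hu, hγu⟩ := htang γ hγ
      obtain ⟨hcont, hmaps, h0, h1⟩ := hγ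
      have hsplit : eVariationOn γ (Set.Icc 0 u) + eVariationOn γ (Set.Icc u 1)
          = eVariationOn γ (Set.Icc (0:ℝ) 1) := by
        have := eVariationOn.Icc_add_Icc γ (s := Set.Icc (0:ℝ) 1) hu.1 hu.2 hu
        rwa [Set.inter_eq_self_of_subset_right (Set.Icc_subset_Icc le_rfl hu.2),
          Set.inter_eq_self_of_subset_right (Set.Icc_subset_Icc hu.1 le_rfl),
          Set.inter_self] at this
      have e1 : edist (γ 0) (γ u) ≤ eVariationOn γ (Set.Icc 0 u) :=
        eVariationOn.edist_le γ (Set.left_mem_Icc.2 hu.1) (Set.right_mem_Icc.2 hu.1)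
      have e2 : edist (γ u) (γ 1) ≤ eVariationOn γ (Set.Icc u 1) :=
        eVariationOn.edist_le γ (Set.left_mem_Icc.2 hu.2) (Set.right_mem_Icc.2 hu.2)
      have hα0 : edist (γ 0) (γ u) = ENNReal.ofReal (Real.sqrt (2*s)) := by
        rw [h0, hγu, edist_dist, dist_eq_norm, alpha11, mk4_sub]
        congr 1
        rw [show s - 0 = s by ring, show Real.sqrt (1-(1-s)^2) - 0 = Real.sqrt (1-(1-s)^2) by ring]
        rw [norm_mk4]
        congr 1
        nlinarith [hsq]
      have hβ0 : edist (γ u) (γ 1) = ENNReal.ofReal (Real.sqrt (2*s)) := by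
        rw [h1, hγu, edist_dist, dist_eq_norm, beta11, mk4_sub]
        congr 1
        rw [show (0:ℝ) - -s = s by ring, show (0:ℝ) - Real.sqrt (1-(1-s)^2) = -Real.sqrt (1-(1-s)^2) by ring]
        rw [norm_mk4]
        congr 1
        nlinarith [hsq]
      have hle : ENNReal.ofReal (2 * Real.sqrt (2 * s - s ^ 2)) ≤
          edist (γ 0) (γ u) + edist (γ u) (γ 1) := by
        rw [hα0, hβ0, ← ENNReal.ofReal_add (Real.sqrt_nonneg _) (Real.sqrt_nonneg _)]
        apply ENNReal.ofReal_le_ofReal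
        have h2 : Real.sqrt (2*s - s^2) ≤ Real.sqrt (2*s) :=
          Real.sqrt_le_sqrt (by nlinarith)
        linarith
      calc ENNReal.ofReal (2 * Real.sqrt (2 * s - s ^ 2))
          ≤ edist (γ 0) (γ u) + edist (γ u) (γ 1) := hle
        _ ≤ eVariationOn γ (Set.Icc 0 u) + eVariationOn γ (Set.Icc u 1) := add_le_add e1 e2
        _ = pathLength γ := hsplit
    have heq : Real.sqrt (2 / s - 1) * ‖alpha11 s - beta11 s‖
        = 2 * Real.sqrt (2 * s - s ^ 2) := by
      have hnn : (0:ℝ) ≤ 2/s - 1 := by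
        rw [sub_nonneg, le_div_iff₀ hs0]; linarith
      have key : Real.sqrt (2/s - 1) * s = Real.sqrt (2*s - s^2) :=
        calc Real.sqrt (2/s-1) * s = Real.sqrt ((2/s-1) * s^2) := by
              rw [Real.sqrt_mul hnn, Real.sqrt_sq hs0.le]
          _ = Real.sqrt (2*s - s^2) := by congr 1; field_simp
      rw [hnorm, show Real.sqrt (2/s - 1) * (2*s) = 2 * (Real.sqrt (2/s-1) * s) by ring, key]
    exact ⟨hα, hβ, hnorm, htang, hd1, heq ▸ hd1⟩
  · intro Cb
    refine ⟨1 / (Cb^2 + 2), ⟨by positivity, ?_⟩, ?_⟩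
    · rw [div_lt_one (by positivity)]; nlinarith [sq_nonneg Cb]
    · have h1 : 2 / (1 / (Cb^2 + 2)) - 1 = 2*Cb^2 + 3 := by
        rw [div_div_eq_mul_div, div_one]; ring
      rw [h1]
      calc Cb ≤ |Cb| := le_abs_self Cb
        _ = Real.sqrt (Cb^2) := (Real.sqrt_sq_eq_abs Cb).symm
        _ < Real.sqrt (2*Cb^2 + 3) := by
            apply Real.sqrt_lt_sqrt (sq_nonneg Cb); nlinarith [sq_nonneg Cb]
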